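/- arXiv:1206.0967 — 3 statements merged into one kernel-verified Lean document; each statement's English description precedes it below -/
import Mathlib

section
/- If a set A ⊆ ℕ contains arithmetic progressions of every finite length, then there exists an ultrafilter p with A ∈ p such that every member set of p contains arithmetic progressions of every finite length. (The proof may assume van der Waerden's theorem.) -/
/-- The set `A` contains an arithmetic progression of length `k`. -/
def ContainsAP (A : Set ℕ) (k : ℕ) : Prop :=
  ∃ a b : ℕ, 0 < b ∧ ∀ i < k, a + i * b ∈ A

namespace APRichAux

/-- `A` contains arithmetic progressions of every length. -/
def Rich (A : Set ℕ) : Prop := ∀ k, ContainsAP A k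

lemma containsAP_mono {X Y : Set ℕ} (h : X ⊆ Y) {k : ℕ} (hX : ContainsAP X k) :
    ContainsAP Y k := by
  obtain ⟨a, b, hb, hm⟩ := hX
  exact ⟨a, b, hb, fun i hi => h (hm i hi)⟩

lemma containsAP_anti {X : Set ℕ} {k l : ℕ} (h : k ≤ l) (hX : ContainsAP X l) :
    ContainsAP X k := by
  obtain ⟨a, b, hb, hm⟩ := hX
  exact ⟨a, b, hb, fun i hi => hm i (lt_of_lt_of_le hi h)⟩

lemma rich_mono {X Y : Set ℕ} (h : X ⊆ Y) (hX : Rich X) : Rich Y :=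
  fun k => containsAP_mono h (hX k)

lemma not_rich_empty : ¬ Rich (∅ : Set ℕ) := by
  intro h
  obtain ⟨a, b, hb, hm⟩ := h 1
  exact hm 0 one_pos

/-- Core van der Waerden argument: a length-`L` monochromatic sub-AP of a long AP of `Z`. -/
lemma key {Z X Y : Set ℕ} (hZ : Rich Z) (hsub : Z ⊆ X ∪ Y) (L : ℕ) :
    ContainsAP X L ∨ ContainsAP Y L := by
  classical
  rcases Nat.eq_zero_or_pos L with rfl | hL
  · exact Or.inl ⟨0, 1, one_pos, fun i hi => absurd hi (by omega)⟩
  choose a b hb hmem using hZ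
  set U := Filter.hyperfilter ℕ with hU
  set C : ℕ → Bool := fun i => decide ({N : ℕ | a N + i * b N ∈ X} ∈ U) with hC
  obtain ⟨d, hd, e, c, hc⟩ := Combinatorics.exists_mono_homothetic_copy (Finset.range L) C
  have hs : ∀ s, s ∈ Finset.range L →
      ∀ᶠ N in (U : Filter ℕ), ((a N + (d * s + e) * b N ∈ X) ↔ c = true) := by
    intro s hsL
    have h1 := hc s hsL
    rw [smul_eq_mul] at h1
    by_cases hmemU : {N : ℕ | a N + (d * s + e) * b N ∈ X} ∈ U
    · have hct : c = true := by rw [← h1]; simp [hC, hmemU]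
      filter_upwards [hmemU] with N hN
      simpa [hct] using hN
    · have hcf : c = false := by rw [← h1]; simp [hC, hmemU]
      have hcmpl : {N : ℕ | a N + (d * s + e) * b N ∈ X}ᶜ ∈ U :=
        Ultrafilter.compl_mem_iff_notMem.mpr hmemU
      filter_upwards [hcmpl] with N hN
      simp only [hcf]
      simpa using hN
  have hT : ∀ᶠ N in (U : Filter ℕ),
      ∀ s ∈ Finset.range L, ((a N + (d * s + e) * b N ∈ X) ↔ c = true) :=
    (Filter.eventually_all_finset _).2 hs
  have h2 : ∀ᶠ N in (U : Filter ℕ), d * (L - 1) + e < N :=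
    Nat.hyperfilter_le_atTop (Filter.eventually_gt_atTop (d * (L - 1) + e))
  obtain ⟨N, hTN, h2N⟩ := (hT.and h2).exists
  have hidx : ∀ i < L, d * i + e < N := by
    intro i hi
    have : d * i ≤ d * (L - 1) := Nat.mul_le_mul_left d (by omega)
    omega
  have hinZ : ∀ i < L, a N + (d * i + e) * b N ∈ Z := fun i hi =>
    hmem N _ (hidx i hi)
  have heq : ∀ i : ℕ, (a N + e * b N) + i * (d * b N) = a N + (d * i + e) * b N := by
    intro i; ring
  cases hcase : c with
  | true =>
    left
    refine ⟨a N + e * b N, d * b N, Nat.mul_pos hd (hb N), fun i hi => ?_⟩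
    rw [heq]
    exact (hTN i (Finset.mem_range.mpr hi)).2 hcase
  | false =>
    right
    refine ⟨a N + e * b N, d * b N, Nat.mul_pos hd (hb N), fun i hi => ?_⟩
    rw [heq]
    have hnX : a N + (d * i + e) * b N ∉ X := by
      intro hx
      have := (hTN i (Finset.mem_range.mpr hi)).1 hx
      simp [hcase] at this
    rcases hsub (hinZ i hi) with hx | hy
    · exact absurd hx hnX
    · exact hy

/-- Partition regularity of AP-richness. -/
lemma rich_union {Z X Y : Set ℕ} (hZ : Rich Z) (hsub : Z ⊆ X ∪ Y) :
    Rich X ∨ Rich Y := by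
  by_contra h
  push_neg at h
  obtain ⟨hX, hY⟩ := h
  obtain ⟨k₁, hk₁⟩ := not_forall.mp hX
  obtain ⟨k₂, hk₂⟩ := not_forall.mp hY
  rcases key hZ hsub (max k₁ k₂) with h | h
  · exact hk₁ (containsAP_anti (le_max_left _ _) h)
  · exact hk₂ (containsAP_anti (le_max_right _ _) h)

end APRichAux

open APRichAux in
/-- If a set contains arithmetic progressions of every length, then it belongs to some
ultrafilter all of whose members contain arithmetic progressions of every length. -/
theorem exists_progression_rich_ultrafilter (A : Set ℕ)
    (hA : ∀ k : ℕ, ContainsAP A k) :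
    ∃ p : Ultrafilter ℕ, A ∈ p ∧ ∀ B ∈ p, ∀ k : ℕ, ContainsAP B k := by
  classical
  set S : Set (Filter ℕ) := {F | A ∈ F ∧ ∀ B ∈ F, Rich B} with hSdef
  have hPA : (Filter.principal A) ∈ S :=
    ⟨Filter.mem_principal_self A,
     fun B hB => rich_mono (Filter.mem_principal.mp hB) hA⟩
  -- Zorn's lemma (in the dual order) to find a minimal element of S
  have hzorn := zorn_le₀ (α := (Filter ℕ)ᵒᵈ) (OrderDual.ofDual ⁻¹' S) ?hb
  case hb =>
    intro c hcS hchain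
    rcases c.eq_empty_or_nonempty with rfl | hcne
    · exact ⟨OrderDual.toDual (Filter.principal A), hPA, fun z hz => absurd hz (by simp)⟩
    · -- lower bound in Filter order: sInf of the chain
      have hdir : Directed (· ≥ ·) (fun F : c => (OrderDual.ofDual F.1 : Filter ℕ)) := by
        rintro ⟨F, hF⟩ ⟨G, hG⟩
        rcases hchain.total hF hG with h | h
        · exact ⟨⟨G, hG⟩, h, le_refl _⟩
        · exact ⟨⟨F, hF⟩, le_refl _, h⟩
      haveI : Nonempty c := hcne.to_subtype
      set Finf : Filter ℕ := ⨅ F : c, (OrderDual.ofDual F.1 : Filter ℕ) with hFinf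
      have hmemInf : ∀ s : Set ℕ, s ∈ Finf ↔ ∃ F : c, s ∈ (OrderDual.ofDual F.1 : Filter ℕ) :=
        fun s => Filter.mem_iInf_of_directed hdir s
      refine ⟨OrderDual.toDual Finf, ⟨?_, ?_⟩, ?_⟩
      · obtain ⟨F, hF⟩ := hcne
        exact (hmemInf A).mpr ⟨⟨F, hF⟩, (hcS hF).1⟩
      · intro B hB
        obtain ⟨⟨F, hF⟩, hBF⟩ := (hmemInf B).mp hB
        exact (hcS hF).2 B hBF
      · intro z hz
        exact iInf_le (fun F : c => (OrderDual.ofDual F.1 : Filter ℕ)) ⟨z, hz⟩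
  obtain ⟨Fd, hFd⟩ := hzorn
  set F : Filter ℕ := OrderDual.ofDual Fd with hF
  have hFS : F ∈ S := hFd.1
  have hFmin : ∀ G : Filter ℕ, G ∈ S → G ≤ F → F ≤ G := fun G hGS hGF => hFd.2 hGS hGF
  -- F is an ultrafilter
  have hne : F.NeBot := by
    constructor
    intro hbot
    have : (∅ : Set ℕ) ∈ F := by rw [hbot]; exact Filter.mem_bot
    exact not_rich_empty (hFS.2 ∅ this)
  -- key dichotomy from partition regularity
  have hdichot : ∀ s : Set ℕ, (∀ C ∈ F, Rich (C ∩ s)) ∨ (∀ C ∈ F, Rich (C ∩ sᶜ)) := by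
    intro s
    by_contra h
    push_neg at h
    obtain ⟨⟨C, hC, hCs⟩, ⟨D, hD, hDs⟩⟩ := h
    have hCD : Rich (C ∩ D) := hFS.2 _ (Filter.inter_mem hC hD)
    have hsub : C ∩ D ⊆ (C ∩ D ∩ s) ∪ (C ∩ D ∩ sᶜ) := by
      intro x hx
      by_cases hxs : x ∈ s
      · exact Or.inl ⟨hx, hxs⟩
      · exact Or.inr ⟨hx, hxs⟩
    rcases rich_union hCD hsub with h | h
    · exact hCs (rich_mono (fun x hx => ⟨hx.1.1, hx.2⟩) h)
    · exact hDs (rich_mono (fun x hx => ⟨hx.1.2, hx.2⟩) h)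
  have hult : ∀ s : Set ℕ, sᶜ ∉ F ↔ s ∈ F := by
    intro s
    constructor
    · intro hsc
      rcases hdichot s with hcase | hcase
      · -- F ⊓ 𝓟 s is in S
        have hGS : F ⊓ Filter.principal s ∈ S := by
          constructor
          · exact Filter.mem_inf_of_left hFS.1
          · intro B hB
            rw [Filter.mem_inf_principal] at hB
            have : Rich ({x | x ∈ s → x ∈ B} ∩ s) := hcase _ hB
            exact rich_mono (fun x hx => hx.1 hx.2) this
        have hle : F ≤ F ⊓ Filter.principal s := hFmin _ hGS inf_le_left
        exact hle (Filter.mem_inf_of_right (Filter.mem_principal_self s))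
      · -- then sᶜ ∈ F, contradiction
        exfalso
        have hGS : F ⊓ Filter.principal sᶜ ∈ S := by
          constructor
          · exact Filter.mem_inf_of_left hFS.1
          · intro B hB
            rw [Filter.mem_inf_principal] at hB
            have : Rich ({x | x ∈ sᶜ → x ∈ B} ∩ sᶜ) := hcase _ hB
            exact rich_mono (fun x hx => hx.1 hx.2) this
        have hle : F ≤ F ⊓ Filter.principal sᶜ := hFmin _ hGS inf_le_left
        exact hsc (hle (Filter.mem_inf_of_right (Filter.mem_principal_self sᶜ)))
    · intro hsF hscF
      have : s ∩ sᶜ ∈ F := Filter.inter_mem hsF hscF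
      rw [Set.inter_compl_self] at this
      exact not_rich_empty (hFS.2 ∅ this)
  refine ⟨Ultrafilter.ofComplNotMemIff F hult, hFS.1, fun B hB k => hFS.2 B hB k⟩
end

section
/- A set A ⊆ ℕ is an IP-set (contains FS((n_k)) = {n_{k₁} + ⋯ + n_{k_l} : k₁ < ⋯ < k_l} for some strictly increasing sequence (n_k)) if and only if A belongs to some non-principal idempotent ultrafilter p = p + p on ℕ. -/
/-!
The hypothesis on `add` forces it to be the usual addition of ultrafilters, so both directions
come from Mathlib's Hindman machinery. If `f` is strictly increasing,
`Hindman.exists_idempotent_ultrafilter_le_FS` yields an idempotent `p` containing the finite sums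
of the positive tail of `f`; such a `p` is non-principal because the only idempotent principal
ultrafilter is `pure 0`, and `0` is not a finite sum of positive terms. Conversely, Galvin–Glazer
(`Hindman.exists_FS_of_large`) gives a sequence `a` with `FS a ⊆ A \ {0}`. It is positive but
need not increase; summing it over consecutive blocks, each longer than the total of all earlier
terms, gives a strictly increasing sequence whose finite sums are still finite sums of `a`.
-/

/-- The shift `A - n = {k : k + n ∈ A}`. -/
def shiftSet (A : Set ℕ) (n : ℕ) : Set ℕ := {k | k + n ∈ A}

/-- The set of finite sums of a sequence `f`. -/
def FSset (f : ℕ → ℕ) : Set ℕ :=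
  {n | ∃ F : Finset ℕ, F.Nonempty ∧ n = ∑ k ∈ F, f k}

attribute [local instance] Ultrafilter.add Ultrafilter.addSemigroup

open Finset

namespace Ultrafilter

theorem mem_add_iff_shiftSet_mem (B : Set ℕ) (q p : Ultrafilter ℕ) :
    B ∈ q + p ↔ {n | shiftSet B n ∈ p} ∈ q := by
  simp only [shiftSet, add_comm _ (_ : ℕ)]
  exact eventually_add q p (· ∈ B)

theorem pure_add_pure {M : Type*} [Add M] (m n : M) :
    (pure m + pure n : Ultrafilter M) = pure (m + n) :=
  coe_injective <| Filter.ext fun s => (eventually_add _ _ (· ∈ s)).trans (by simp)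

theorem eq_zero_of_pure_add_self {M : Type*} [AddMonoid M] [IsLeftCancelAdd M] {n : M}
    (h : (pure n + pure n : Ultrafilter M) = pure n) : n = 0 := by
  rw [pure_add_pure] at h
  exact add_eq_left.mp (pure_injective h)

theorem compl_singleton_mem_of_ne_pure {α : Type*} {p : Ultrafilter α} {a : α}
    (hp : p ≠ pure a) : {a}ᶜ ∈ p := by
  refine compl_mem_iff_notMem.mpr fun ha => ?_
  obtain ⟨x, rfl, rfl⟩ := eq_pure_of_finite_mem (Set.finite_singleton a) ha
  exact hp rfl

end Ultrafilter

theorem FSset_pos {f : ℕ → ℕ} (hf : ∀ k, 0 < f k) {n : ℕ} (hn : n ∈ FSset f) : 0 < n := by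
  obtain ⟨F, ⟨k, hk⟩, rfl⟩ := hn
  exact (hf k).trans_le (single_le_sum (fun _ _ => Nat.zero_le _) hk)

theorem FSset_comp_subset (f : ℕ → ℕ) {e : ℕ → ℕ} (he : e.Injective) :
    FSset (f ∘ e) ⊆ FSset f := by
  rintro _ ⟨F, hF, rfl⟩
  exact ⟨F.image e, hF.image e, (sum_image he.injOn).symm⟩

theorem FS_eq_FSset (a : Stream' ℕ) : Hindman.FS a = FSset a.get := by
  refine Set.Subset.antisymm (fun m hm => ?_) fun _ ⟨F, hF, hm⟩ =>
    hm ▸ Hindman.FS.finsetSum a F hF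
  induction hm with
  | head' a => exact ⟨{0}, singleton_nonempty 0, by simp [Stream'.head]⟩
  | tail' a m _ ih =>
    obtain ⟨F, hF, rfl⟩ := ih
    exact ⟨F.map (addRightEmbedding 1), hF.map, by simp [sum_map]⟩
  | cons' a m _ ih =>
    obtain ⟨F, hF, rfl⟩ := ih
    refine ⟨insert 0 (F.map (addRightEmbedding 1)), insert_nonempty _ _, ?_⟩
    simp [sum_insert, sum_map, Stream'.head]

def blockSum (a h : ℕ → ℕ) (n : ℕ) : ℕ := ∑ i ∈ Ico (h n) (h (n + 1)), a i

theorem FSset_blockSum_subset (a : ℕ → ℕ) {h : ℕ → ℕ} (hh : StrictMono h) :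
    FSset (blockSum a h) ⊆ FSset a := by
  rintro _ ⟨F, ⟨k, hk⟩, rfl⟩
  have hdisj : (F : Set ℕ).PairwiseDisjoint fun k => Ico (h k) (h (k + 1)) :=
    fun k _ l _ hkl => by
      simpa [Function.onFun, ← disjoint_coe] using
        hh.monotone.pairwise_disjoint_on_Ico_succ hkl
  refine ⟨F.biUnion fun k => Ico (h k) (h (k + 1)), ⟨h k, ?_⟩, (sum_biUnion hdisj).symm⟩
  exact mem_biUnion.mpr ⟨k, hk, left_mem_Ico.mpr (hh k.lt_succ_self)⟩

def blockEnd (a : ℕ → ℕ) : ℕ → ℕ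
  | 0 => 0
  | n + 1 => blockEnd a n + 1 + ∑ i ∈ range (blockEnd a n), a i

theorem blockEnd_strictMono (a : ℕ → ℕ) : StrictMono (blockEnd a) :=
  strictMono_nat_of_lt_succ fun n => by simp only [blockEnd]; omega

theorem blockSum_blockEnd_strictMono {a : ℕ → ℕ} (ha : ∀ i, 0 < a i) :
    StrictMono (blockSum a (blockEnd a)) := by
  refine strictMono_nat_of_lt_succ fun n => ?_
  set e := blockEnd a
  have h_le_prefix : blockSum a e n ≤ ∑ i ∈ range (e (n + 1)), a i :=
    sum_le_sum_of_subset (fun i hi => mem_range.mpr (mem_Ico.mp hi).2)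
  have h_length_le : e (n + 2) - e (n + 1) ≤ blockSum a e (n + 1) := by
    simpa [blockSum] using card_nsmul_le_sum (Ico (e (n + 1)) (e (n + 2))) a 1 fun i _ => ha i
  have h_length : e (n + 2) = e (n + 1) + 1 + ∑ i ∈ range (e (n + 1)), a i := rfl
  omega

theorem exists_strictMono_FSset_subset {a : ℕ → ℕ} (ha : ∀ i, 0 < a i) :
    ∃ f : ℕ → ℕ, StrictMono f ∧ FSset f ⊆ FSset a :=
  ⟨_, blockSum_blockEnd_strictMono ha, FSset_blockSum_subset a (blockEnd_strictMono a)⟩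

theorem exists_idempotent_ne_pure_FSset_mem {f : ℕ → ℕ} (hf : StrictMono f) :
    ∃ p : Ultrafilter ℕ, p + p = p ∧ (∀ n : ℕ, p ≠ pure n) ∧ FSset f ∈ p := by
  obtain ⟨p, hp, hp_FS⟩ := Hindman.exists_idempotent_ultrafilter_le_FS (Stream'.tail f)
  replace hp_FS : FSset (f ∘ Nat.succ) ∈ p := FS_eq_FSset (Stream'.tail f) ▸ hp_FS
  refine ⟨p, hp, ?_, Filter.mem_of_superset hp_FS (FSset_comp_subset f Nat.succ_injective)⟩
  rintro n rfl
  have h_pos : ∀ k, 0 < (f ∘ Nat.succ) k := fun k => (Nat.zero_le _).trans_lt (hf k.succ_pos)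
  exact (FSset_pos h_pos (Ultrafilter.mem_pure.mp hp_FS)).ne'
    (Ultrafilter.eq_zero_of_pure_add_self hp)

theorem exists_strictMono_FSset_subset_of_idempotent {p : Ultrafilter ℕ} (hp : p + p = p)
    (hp_ne : ∀ n : ℕ, p ≠ pure n) {A : Set ℕ} (hA : A ∈ p) :
    ∃ f : ℕ → ℕ, StrictMono f ∧ FSset f ⊆ A := by
  obtain ⟨a, ha⟩ := Hindman.exists_FS_of_large p hp _
    (Filter.inter_mem hA (Ultrafilter.compl_singleton_mem_of_ne_pure (hp_ne 0)))
  rw [FS_eq_FSset] at ha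
  have ha_pos : ∀ i, 0 < a i := fun i =>
    Nat.pos_of_ne_zero (ha ⟨{i}, singleton_nonempty i, (sum_singleton a i).symm⟩).2
  obtain ⟨f, hf, hfa⟩ := exists_strictMono_FSset_subset ha_pos
  exact ⟨f, hf, hfa.trans fun n hn => (ha hn).1⟩

/-- A set is an IP-set (contains a set of finite sums of a strictly increasing sequence)
iff it belongs to some non-principal idempotent ultrafilter. -/
theorem ip_set_iff_nonprincipal_idempotent (A : Set ℕ)
    (add : Ultrafilter ℕ → Ultrafilter ℕ → Ultrafilter ℕ)
    (hadd : ∀ (B : Set ℕ) (q p : Ultrafilter ℕ),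
      B ∈ add q p ↔ {n | shiftSet B n ∈ p} ∈ q) :
    (∃ f : ℕ → ℕ, StrictMono f ∧ FSset f ⊆ A) ↔
    ∃ p : Ultrafilter ℕ, add p p = p ∧ (∀ n : ℕ, p ≠ (pure n : Ultrafilter ℕ)) ∧ A ∈ p := by
  obtain rfl : add = (· + ·) := funext₂ fun q p => Ultrafilter.coe_injective <|
    Filter.ext fun B => (hadd B q p).trans (Ultrafilter.mem_add_iff_shiftSet_mem B q p).symm
  constructor
  · rintro ⟨f, hf, hfA⟩
    obtain ⟨p, hp, hp_ne, hfp⟩ := exists_idempotent_ne_pure_FSset_mem hf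
    exact ⟨p, hp, hp_ne, Filter.mem_of_superset hfp hfA⟩
  · rintro ⟨p, hp, hp_ne, hA⟩
    exact exists_strictMono_FSset_subset_of_idempotent hp hp_ne hA
end

section
/- For every finite partition ℕ = C₁ ⊎ ⋯ ⊎ C_r, at least one part C_i contains a set of finite sums FS((n_k)_{k=1}^∞) of some strictly increasing sequence of natural numbers (Hindman's theorem). -/
/-!
Mathlib's Hindman theorem (via idempotent ultrafilters) puts all finite sums of some sequence into
one part of the cover. Running it inside the finite sums of the constant sequence `1` makes that
sequence positive. Grouping a positive sequence into consecutive blocks, each longer than the total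
of everything before it, makes the block sums strictly increasing, and their finite sums are still
finite sums of the original sequence.
-/

open Finset Function

namespace Hindman

theorem FS_subset_of_add_mem {M : Type*} [AddSemigroup M] {S : Set M}
    (hS : ∀ x ∈ S, ∀ y ∈ S, x + y ∈ S) {a : Stream' M} (ha : ∀ i, a.get i ∈ S) : FS a ⊆ S := by
  intro m hm
  induction hm with
  | head' a => exact ha 0
  | tail' a m _ ih => exact ih fun i => ha (i + 1)
  | cons' a m _ ih => exact hS _ (ha 0) _ (ih fun i => ha (i + 1))

end Hindman

theorem exists_pos_FSset_subset {ι : Type*} [Finite ι] (C : ι → Set ℕ)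
    (hcover : ⋃ i, C i = Set.univ) :
    ∃ i, ∃ b : ℕ → ℕ, (∀ k, 0 < b k) ∧ FSset b ⊆ C i := by
  let one : Stream' ℕ := Stream'.const 1
  have hpos : Hindman.FS one ⊆ {x | 0 < x} :=
    Hindman.FS_subset_of_add_mem (fun _ hx _ _ => Nat.add_pos_left hx _) fun _ => Nat.one_pos
  have hcov : Hindman.FS one ⊆ ⋃₀ Set.range fun i => C i ∩ {x | 0 < x} := by
    intro x hx
    obtain ⟨i, hi⟩ := Set.mem_iUnion.mp (hcover ▸ Set.mem_univ x)
    exact ⟨_, ⟨i, rfl⟩, hi, hpos hx⟩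
  obtain ⟨_, ⟨i, rfl⟩, b, hb⟩ := Hindman.FS_partition_regular one _ (Set.finite_range _) hcov
  refine ⟨i, b.get, fun k => (hb (Hindman.FS.singleton b k)).2, ?_⟩
  rintro _ ⟨F, hF, rfl⟩
  exact (hb (Hindman.FS.finsetSum b F hF)).1

theorem FSset_blockSums_subset (b : ℕ → ℕ) {B : ℕ → Finset ℕ}
    (hdisj : Pairwise (Disjoint on B)) (hne : ∀ n, (B n).Nonempty) :
    FSset (fun n => ∑ k ∈ B n, b k) ⊆ FSset b := by
  classical
  rintro _ ⟨F, hF, rfl⟩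
  exact ⟨F.biUnion B, hF.biUnion fun n _ => hne n,
    (sum_biUnion fun _ _ _ _ h => hdisj h).symm⟩

def blockBoundary (b : ℕ → ℕ) : ℕ → ℕ
  | 0 => 0
  | n + 1 => blockBoundary b n + ∑ k ∈ range (blockBoundary b n), b k + 1

theorem blockBoundary_strictMono (b : ℕ → ℕ) : StrictMono (blockBoundary b) :=
  strictMono_nat_of_lt_succ fun n => by simp only [blockBoundary]; omega

theorem sum_range_blockBoundary_lt (b : ℕ → ℕ) (hb : ∀ k, 0 < b k) (n : ℕ) :
    ∑ k ∈ range (blockBoundary b n), b k <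
      ∑ k ∈ Ico (blockBoundary b n) (blockBoundary b (n + 1)), b k := by
  calc ∑ k ∈ range (blockBoundary b n), b k
      < (Ico (blockBoundary b n) (blockBoundary b (n + 1))).card := by
        simp only [Nat.card_Ico, blockBoundary]; omega
    _ ≤ _ := by simpa only [smul_eq_mul, mul_one] using card_nsmul_le_sum _ b 1 fun k _ => hb k

theorem exists_strictMono_FSset_subset_s17 (b : ℕ → ℕ) (hb : ∀ k, 0 < b k) :
    ∃ f : ℕ → ℕ, StrictMono f ∧ FSset f ⊆ FSset b := by
  set s := blockBoundary b
  have hs : StrictMono s := blockBoundary_strictMono b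
  refine ⟨fun n => ∑ k ∈ Ico (s n) (s (n + 1)), b k, strictMono_nat_of_lt_succ fun n => ?_,
    FSset_blockSums_subset b ?_ fun n => nonempty_Ico.mpr (hs n.lt_succ_self)⟩
  · calc ∑ k ∈ Ico (s n) (s (n + 1)), b k
        ≤ ∑ k ∈ range (s (n + 1)), b k :=
          sum_le_sum_of_subset fun k hk => mem_range.mpr (mem_Ico.mp hk).2
      _ < _ := sum_range_blockBoundary_lt b hb (n + 1)
  · intro m n hmn
    simpa [← coe_Ico, Order.succ_eq_add_one] using hs.monotone.pairwise_disjoint_on_Ico_succ hmn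

theorem hindman_general (r : ℕ) (C : Fin r → Set ℕ) (hcover : (⋃ i, C i) = Set.univ) :
    ∃ i, ∃ f : ℕ → ℕ, StrictMono f ∧ FSset f ⊆ C i := by
  obtain ⟨i, b, hb, hbC⟩ := exists_pos_FSset_subset C hcover
  obtain ⟨f, hf, hfb⟩ := exists_strictMono_FSset_subset_s17 b hb
  exact ⟨i, f, hf, hfb.trans hbC⟩

/-- Hindman's theorem: for every finite partition of ℕ, some part contains a set of finite
sums of a strictly increasing sequence of natural numbers. -/
theorem hindman (r : ℕ) (C : Fin r → Set ℕ) (hcover : (⋃ i, C i) = Set.univ)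
    (hdisj : Pairwise fun i j => Disjoint (C i) (C j)) :
    ∃ i, ∃ f : ℕ → ℕ, StrictMono f ∧ FSset f ⊆ C i :=
  hindman_general r C hcover
end
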